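/- arXiv:2506.20006 — 5 statements merged into one kernel-verified Lean document; each statement's English description precedes it below -/
import Mathlib

section
/- For unit vectors x, y in ℂ^n, the quantity Tr[(xx* - yy*)(conj(xx* - yy*))] equals |∑ᵢ xᵢ²|² + |∑ᵢ yᵢ²|² - 2|∑ᵢ xᵢyᵢ|². -/
open Matrix BigOperators Complex

noncomputable def outer {n : ℕ} (x : Fin n → ℂ) : Matrix (Fin n) (Fin n) ℂ :=
  Matrix.of fun i j => x i * (starRingEnd ℂ) (x j)

noncomputable def qcost {n : ℕ} (x y : Fin n → ℂ) : ℂ :=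
  Matrix.trace ((outer x - outer y) * (outer x - outer y).map (starRingEnd ℂ))

theorem stmt0 {n : ℕ} (x y : Fin n → ℂ)
    (hx : ∑ i, ‖x i‖ ^ 2 = 1) (hy : ∑ i, ‖y i‖ ^ 2 = 1) :
    qcost x y =
      (‖∑ i, x i ^ 2‖ ^ 2 + ‖∑ i, y i ^ 2‖ ^ 2
        - 2 * ‖∑ i, x i * y i‖ ^ 2 : ℝ) := by
  have habs : ∀ z : ℂ, ((‖z‖ : ℂ) ^ 2) = z * (starRingEnd ℂ) z := by
    intro z
    rw [← Complex.ofReal_pow, ← Complex.normSq_eq_norm_sq, Complex.mul_conj]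
  push_cast
  rw [habs, habs, habs]
  simp only [qcost, outer, Matrix.trace, Matrix.diag, Matrix.mul_apply, Matrix.map_apply,
    Matrix.sub_apply, Matrix.of_apply, map_sub, _root_.map_mul, Complex.conj_conj, map_sum,
    map_pow, Finset.sum_mul_sum, Finset.mul_sum]
  rw [Finset.sum_comm, ← Finset.sum_add_distrib, ← Finset.sum_sub_distrib]
  refine Finset.sum_congr rfl fun i _ => ?_
  rw [Finset.sum_mul, Finset.sum_mul, Finset.sum_mul, Finset.mul_sum,
    ← Finset.sum_add_distrib, ← Finset.sum_sub_distrib]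
  refine Finset.sum_congr rfl fun j _ => ?_
  ring
end

section
/- For unit vectors x, y in ℂ^n, the quantity |∑ᵢ xᵢ²|² + |∑ᵢ yᵢ²|² - 2|∑ᵢ xᵢyᵢ|² is at most 2. -/
open BigOperators Complex

theorem stmt1 {n : ℕ} (x y : Fin n → ℂ)
    (hx : ∑ i, ‖x i‖ ^ 2 = 1) (hy : ∑ i, ‖y i‖ ^ 2 = 1) :
    (‖∑ i, x i ^ 2‖) ^ 2 + (‖∑ i, y i ^ 2‖) ^ 2
      - 2 * (‖∑ i, x i * y i‖) ^ 2 ≤ 2 := by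
  have h1 : ‖∑ i, x i ^ 2‖ ≤ 1 := by
    calc ‖∑ i, x i ^ 2‖ ≤ ∑ i, ‖x i ^ 2‖ :=
          norm_sum_le _ _
      _ = 1 := by simp only [norm_pow]; exact hx
  have h2 : ‖∑ i, y i ^ 2‖ ≤ 1 := by
    calc ‖∑ i, y i ^ 2‖ ≤ ∑ i, ‖y i ^ 2‖ :=
          norm_sum_le _ _
      _ = 1 := by simp only [norm_pow]; exact hy
  have h3 : (0:ℝ) ≤ ‖∑ i, x i ^ 2‖ := norm_nonneg _
  have h4 : (0:ℝ) ≤ ‖∑ i, y i ^ 2‖ := norm_nonneg _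
  have h5 : (0:ℝ) ≤ ‖∑ i, x i * y i‖ := norm_nonneg _
  nlinarith
end

section
/- Let ρ = e₁e₁* (with e₁ = (1,0)) and ν = ½·(vector (1,1)/√2 outer product with itself) in ℂ^{2×2}. Then every quantum transport plan between ρ and ν has transport cost exactly 1, i.e., ∑ₗ ωₗ Tr[(uₗuₗ* - vₗvₗ*)conj(uₗuₗ* - vₗvₗ*)] = 1. -/
open Matrix BigOperators Complex

theorem stmt6 {m : ℕ}
    (ρ ν : Matrix (Fin 2) (Fin 2) ℂ)
    (hρ : ρ = outer ![1, 0])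
    (hν : ν = outer ![(1 / Real.sqrt 2 : ℝ), (1 / Real.sqrt 2 : ℝ)])
    (ω : Fin m → ℝ) (u v : Fin m → Fin 2 → ℂ)
    (hω : ∀ l, 0 < ω l) (hωs : ∑ l, ω l = 1)
    (hu : ∀ l, ∑ i, ‖u l i‖ ^ 2 = 1)
    (hv : ∀ l, ∑ i, ‖v l i‖ ^ 2 = 1)
    (hmarg1 : ∑ l, (ω l : ℂ) • outer (u l) = ρ)
    (hmarg2 : ∑ l, (ω l : ℂ) • outer (v l) = ν) :
    ∑ l, (ω l : ℂ) * qcost (u l) (v l) = 1 := by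
  -- u l 1 = 0
  have hu1 : ∀ l, u l 1 = 0 := by
    have e11 : ∑ l, (ω l : ℂ) * (u l 1 * (starRingEnd ℂ) (u l 1)) = 0 := by
      have := congrFun (congrFun (hmarg1.trans hρ) 1) 1
      simpa [Matrix.sum_apply, outer] using this
    have e11' : ∑ l, ω l * Complex.normSq (u l 1) = 0 := by
      have : ((∑ l, ω l * Complex.normSq (u l 1) : ℝ) : ℂ) = 0 := by
        push_cast
        simpa [Complex.mul_conj] using e11
      exact_mod_cast this
    intro l
    have h := (Finset.sum_eq_zero_iff_of_nonneg (fun l _ =>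
      mul_nonneg (hω l).le (Complex.normSq_nonneg _))).mp e11' l (Finset.mem_univ l)
    have : Complex.normSq (u l 1) = 0 := by
      rcases mul_eq_zero.mp h with h' | h'
      · exact absurd h' (hω l).ne'
      · exact h'
    simpa [Complex.normSq_eq_zero] using this
  -- ν entries
  have hνe : ∀ i j, (outer ![(1 / Real.sqrt 2 : ℝ), (1 / Real.sqrt 2 : ℝ)] : Matrix (Fin 2) (Fin 2) ℂ) i j = 1/2 := by
    intro i j
    have h2 : (Real.sqrt 2) ≠ 0 := by positivity
    have h22 : ((Real.sqrt 2 : ℝ) : ℂ) * ((Real.sqrt 2 : ℝ) : ℂ) = 2 := by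
      rw [← Complex.ofReal_mul, Real.mul_self_sqrt (by norm_num)]; norm_num
    fin_cases i <;> fin_cases j <;>
      · simp [outer, Complex.conj_ofReal]
        rw [← mul_inv, h22]
  have ev : ∀ i j : Fin 2, ∑ l, (ω l : ℂ) * (v l i * (starRingEnd ℂ) (v l j)) = 1/2 := by
    intro i j
    have := congrFun (congrFun (hmarg2.trans hν) i) j
    rw [hνe i j] at this
    simpa [Matrix.sum_apply, outer] using this
  -- v l 0 = v l 1
  have hveq : ∀ l, v l 1 = v l 0 := by
    have key : ∑ l, ω l * Complex.normSq (v l 0 - v l 1) = 0 := by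
      have : ((∑ l, ω l * Complex.normSq (v l 0 - v l 1) : ℝ) : ℂ) = 0 := by
        push_cast
        have expand : ∀ l, ((Complex.normSq (v l 0 - v l 1) : ℂ))
            = v l 0 * (starRingEnd ℂ) (v l 0) + v l 1 * (starRingEnd ℂ) (v l 1)
              - v l 0 * (starRingEnd ℂ) (v l 1) - v l 1 * (starRingEnd ℂ) (v l 0) := by
          intro l
          rw [← Complex.mul_conj]
          simp [map_sub]
          ring
        calc ∑ l, (ω l : ℂ) * (Complex.normSq (v l 0 - v l 1) : ℂ)
            = ∑ l, ((ω l : ℂ) * (v l 0 * (starRingEnd ℂ) (v l 0))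
              + (ω l : ℂ) * (v l 1 * (starRingEnd ℂ) (v l 1))
              - (ω l : ℂ) * (v l 0 * (starRingEnd ℂ) (v l 1))
              - (ω l : ℂ) * (v l 1 * (starRingEnd ℂ) (v l 0))) := by
              refine Finset.sum_congr rfl fun l _ => ?_
              rw [expand l]; ring
          _ = 0 := by
              rw [Finset.sum_sub_distrib, Finset.sum_sub_distrib, Finset.sum_add_distrib,
                ev 0 0, ev 1 1, ev 0 1, ev 1 0]
              ring
      exact_mod_cast this
    intro l
    have h := (Finset.sum_eq_zero_iff_of_nonneg (fun l _ =>
      mul_nonneg (hω l).le (Complex.normSq_nonneg _))).mp key l (Finset.mem_univ l)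
    have : Complex.normSq (v l 0 - v l 1) = 0 := by
      rcases mul_eq_zero.mp h with h' | h'
      · exact absurd h' (hω l).ne'
      · exact h'
    have := Complex.normSq_eq_zero.mp this
    linear_combination -this
  -- norms
  have hu0 : ∀ l, u l 0 * (starRingEnd ℂ) (u l 0) = 1 := by
    intro l
    have this1 := hu l
    rw [Fin.sum_univ_two, hu1 l] at this1
    simp only [map_zero, norm_zero, ne_eq, OfNat.ofNat_ne_zero, not_false_iff, zero_pow, add_zero] at this1
    rw [Complex.mul_conj, Complex.normSq_eq_norm_sq]
    exact_mod_cast this1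
  have hv0 : ∀ l, v l 0 * (starRingEnd ℂ) (v l 0) = 1/2 := by
    intro l
    have this1 := hv l
    rw [Fin.sum_univ_two, hveq l] at this1
    have h2 : ‖v l 0‖ ^ 2 = 1/2 := by linarith
    rw [Complex.mul_conj, Complex.normSq_eq_norm_sq]
    rw [show ((1:ℂ)/2) = ((1/2 : ℝ) : ℂ) by norm_num]
    exact_mod_cast h2
  -- qcost = 1 for each l
  have hq : ∀ l, qcost (u l) (v l) = 1 := by
    intro l
    simp only [qcost, outer, Matrix.trace, Matrix.diag, Matrix.mul_apply, Matrix.map_apply,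
      Matrix.sub_apply, Matrix.of_apply, Fin.sum_univ_two, map_sub, _root_.map_mul,
      Complex.conj_conj, map_zero, hu1 l, hveq l, mul_zero, zero_mul, sub_zero, zero_sub]
    have h1 := hu0 l
    have h2 := hv0 l
    linear_combination (u l 0 * (starRingEnd ℂ) (u l 0) - v l 0 * (starRingEnd ℂ) (v l 0) + 1/2) * h1
      + (4 * (v l 0 * (starRingEnd ℂ) (v l 0)) - u l 0 * (starRingEnd ℂ) (u l 0) + 1) * h2
  calc ∑ l, (ω l : ℂ) * qcost (u l) (v l) = ∑ l, (ω l : ℂ) := by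
        refine Finset.sum_congr rfl fun l _ => ?_
        rw [hq l, mul_one]
    _ = 1 := by exact_mod_cast hωs
end

section
/- For ρ = ½[[1,-1],[-1,1]] and ν = ½[[1,1],[1,1]] (orthogonal pure states in ℂ²), every quantum transport plan between ρ and ν has cost exactly 2; hence W₂²(ρ,ν) = 2 and the universal upper bound 2 is attained. -/
open Matrix BigOperators Complex

lemma vanish {m : ℕ} (ω : Fin m → ℝ) (hω : ∀ l, 0 < ω l) (z : Fin m → ℂ)
    (h : ∑ l, (ω l : ℂ) * (z l * (starRingEnd ℂ) (z l)) = 0) : ∀ l, z l = 0 := by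
  have h' : ∑ l, ω l * Complex.normSq (z l) = 0 := by
    have : ((∑ l, ω l * Complex.normSq (z l) : ℝ) : ℂ) = 0 := by
      push_cast
      rw [← h]
      congr 1; funext l
      rw [Complex.mul_conj]
    exact_mod_cast this
  intro l
  have hl := (Finset.sum_eq_zero_iff_of_nonneg
    (fun i _ => mul_nonneg (hω i).le (Complex.normSq_nonneg _))).mp h' l (Finset.mem_univ l)
  have : Complex.normSq (z l) = 0 := by
    rcases mul_eq_zero.mp hl with h | h
    · exact absurd h (ne_of_gt (hω l))
    · exact h
  exact Complex.normSq_eq_zero.mp this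

lemma qcost_val (α β : ℂ) (hα : α * (starRingEnd ℂ) α = 1/2)
    (hβ : β * (starRingEnd ℂ) β = 1/2) :
    qcost ![α, -α] ![β, β] = 2 := by
  simp only [qcost, outer, Matrix.trace_fin_two, Matrix.mul_apply, Matrix.map_apply,
    Matrix.sub_apply, Matrix.of_apply, Fin.sum_univ_two, Matrix.cons_val_zero,
    Matrix.cons_val_one, Matrix.head_cons, map_sub, _root_.map_mul, _root_.map_neg,
    Complex.conj_conj]
  linear_combination (4 * (α * (starRingEnd ℂ) α) + 2) * hα
    + (4 * (β * (starRingEnd ℂ) β) + 2) * hβ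

theorem stmt9 {m : ℕ}
    (ρ ν : Matrix (Fin 2) (Fin 2) ℂ)
    (hρ : ρ = outer ![(1 / Real.sqrt 2 : ℝ), -(1 / Real.sqrt 2 : ℝ)])
    (hν : ν = outer ![(1 / Real.sqrt 2 : ℝ), (1 / Real.sqrt 2 : ℝ)])
    (ω : Fin m → ℝ) (u v : Fin m → Fin 2 → ℂ)
    (hω : ∀ l, 0 < ω l) (hωs : ∑ l, ω l = 1)
    (hu : ∀ l, ∑ i, ‖u l i‖ ^ 2 = 1)
    (hv : ∀ l, ∑ i, ‖v l i‖ ^ 2 = 1)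
    (hmarg1 : ∑ l, (ω l : ℂ) • outer (u l) = ρ)
    (hmarg2 : ∑ l, (ω l : ℂ) • outer (v l) = ν) :
    ∑ l, (ω l : ℂ) * qcost (u l) (v l) = 2 := by
  subst hρ hν
  have key1 : ∀ l, u l 0 + u l 1 = 0 := by
    apply vanish ω hω
    have h := congrArg (fun M : Matrix (Fin 2) (Fin 2) ℂ =>
      M 0 0 + M 0 1 + M 1 0 + M 1 1) hmarg1
    simp only [Matrix.sum_apply, Matrix.smul_apply, outer, Matrix.of_apply,
      smul_eq_mul, Matrix.cons_val_zero, Matrix.cons_val_one, Matrix.head_cons,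
      Complex.ofReal_neg, map_neg, Complex.conj_ofReal] at h
    rw [← Finset.sum_add_distrib, ← Finset.sum_add_distrib, ← Finset.sum_add_distrib] at h
    calc ∑ l, (ω l : ℂ) * ((u l 0 + u l 1) * (starRingEnd ℂ) (u l 0 + u l 1))
        = ∑ l, ((ω l : ℂ) * (u l 0 * (starRingEnd ℂ) (u l 0))
          + (ω l : ℂ) * (u l 0 * (starRingEnd ℂ) (u l 1))
          + (ω l : ℂ) * (u l 1 * (starRingEnd ℂ) (u l 0))
          + (ω l : ℂ) * (u l 1 * (starRingEnd ℂ) (u l 1))) := by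
          refine Finset.sum_congr rfl fun l _ => ?_
          simp only [map_add]; ring
      _ = 0 := by rw [h]; ring
  have key2 : ∀ l, v l 0 - v l 1 = 0 := by
    apply vanish ω hω
    have h := congrArg (fun M : Matrix (Fin 2) (Fin 2) ℂ =>
      M 0 0 - M 0 1 - M 1 0 + M 1 1) hmarg2
    simp only [Matrix.sum_apply, Matrix.smul_apply, outer, Matrix.of_apply,
      smul_eq_mul, Matrix.cons_val_zero, Matrix.cons_val_one, Matrix.head_cons,
      Complex.conj_ofReal] at h
    rw [← Finset.sum_sub_distrib, ← Finset.sum_sub_distrib, ← Finset.sum_add_distrib] at h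
    calc ∑ l, (ω l : ℂ) * ((v l 0 - v l 1) * (starRingEnd ℂ) (v l 0 - v l 1))
        = ∑ l, ((ω l : ℂ) * (v l 0 * (starRingEnd ℂ) (v l 0))
          - (ω l : ℂ) * (v l 0 * (starRingEnd ℂ) (v l 1))
          - (ω l : ℂ) * (v l 1 * (starRingEnd ℂ) (v l 0))
          + (ω l : ℂ) * (v l 1 * (starRingEnd ℂ) (v l 1))) := by
          refine Finset.sum_congr rfl fun l _ => ?_
          simp only [map_sub]; ring
      _ = 0 := by rw [h]; ring
  have hq : ∀ l, qcost (u l) (v l) = 2 := by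
    intro l
    have hu1 : u l 1 = -(u l 0) := by linear_combination key1 l
    have hv1 : v l 1 = v l 0 := by linear_combination - key2 l
    have hue : u l = ![u l 0, -(u l 0)] := by
      funext i; fin_cases i <;> simp [hu1]
    have hve : v l = ![v l 0, v l 0] := by
      funext i; fin_cases i <;> simp [hv1]
    have hnu : u l 0 * (starRingEnd ℂ) (u l 0) = 1/2 := by
      have := hu l
      rw [Fin.sum_univ_two, hu1] at this
      rw [Complex.sq_norm, Complex.sq_norm, Complex.normSq_neg] at this
      have h2 : Complex.normSq (u l 0) = 1/2 := by linarith
      rw [Complex.mul_conj, h2]; norm_num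
    have hnv : v l 0 * (starRingEnd ℂ) (v l 0) = 1/2 := by
      have := hv l
      rw [Fin.sum_univ_two, hv1] at this
      rw [Complex.sq_norm] at this
      have h2 : Complex.normSq (v l 0) = 1/2 := by linarith
      rw [Complex.mul_conj, h2]; norm_num
    rw [hue, hve]
    exact qcost_val _ _ hnu hnv
  calc ∑ l, (ω l : ℂ) * qcost (u l) (v l) = ∑ l, (ω l : ℂ) * 2 := by
        refine Finset.sum_congr rfl fun l _ => ?_; rw [hq l]
    _ = 2 := by
        rw [← Finset.sum_mul]
        have : (∑ l, (ω l : ℂ)) = 1 := by exact_mod_cast congrArg (Complex.ofReal) hωs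
        rw [this, one_mul]
end

section
/- For unit vectors u, v ∈ ℂ^n, the cost Tr[(uu* - vv*)conj(uu* - vv*)] equals 2 if and only if |∑ᵢ uᵢ²| = 1, |∑ᵢ vᵢ²| = 1, and ∑ᵢ uᵢvᵢ = 0. -/
open Matrix BigOperators Complex

lemma qcost_eq {n : ℕ} (u v : Fin n → ℂ) :
    qcost u v = (∑ i, u i ^ 2) * (starRingEnd ℂ) (∑ i, u i ^ 2)
      + (∑ i, v i ^ 2) * (starRingEnd ℂ) (∑ i, v i ^ 2)
      - 2 * ((∑ i, u i * v i) * (starRingEnd ℂ) (∑ i, u i * v i)) := by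
  simp only [qcost, outer, Matrix.trace, Matrix.diag, Matrix.mul_apply, Matrix.map_apply,
    Matrix.sub_apply, Matrix.of_apply, map_sub, _root_.map_mul, map_sum,
    Complex.conj_conj]
  rw [Finset.sum_mul_sum, Finset.sum_mul_sum, Finset.sum_mul_sum]
  rw [Finset.mul_sum, ← Finset.sum_add_distrib, ← Finset.sum_sub_distrib]
  apply Finset.sum_congr rfl
  intro i _
  rw [Finset.mul_sum, ← Finset.sum_add_distrib, ← Finset.sum_sub_distrib]
  apply Finset.sum_congr rfl
  intro j _
  simp only [map_pow, _root_.map_mul]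
  ring

theorem stmt10 {n : ℕ} (u v : Fin n → ℂ)
    (hu : ∑ i, ‖u i‖ ^ 2 = 1) (hv : ∑ i, ‖v i‖ ^ 2 = 1) :
    qcost u v = 2 ↔
      ‖∑ i, u i ^ 2‖ = 1 ∧ ‖∑ i, v i ^ 2‖ = 1 ∧
      ∑ i, u i * v i = 0 := by
  set Su := ∑ i, u i ^ 2 with hSu
  set Sv := ∑ i, v i ^ 2 with hSv
  set T := ∑ i, u i * v i with hT
  have hq : qcost u v = ((‖Su‖ ^ 2 + ‖Sv‖ ^ 2
      - 2 * ‖T‖ ^ 2 : ℝ) : ℂ) := by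
    rw [qcost_eq, Complex.mul_conj, Complex.mul_conj, Complex.mul_conj]
    push_cast [← Complex.sq_norm]
    ring
  have key : qcost u v = 2 ↔
      ‖Su‖ ^ 2 + ‖Sv‖ ^ 2 - 2 * ‖T‖ ^ 2 = 2 := by
    rw [hq, show (2 : ℂ) = ((2 : ℝ) : ℂ) by norm_num, Complex.ofReal_inj]
  have ha : ‖Su‖ ≤ 1 := by
    calc ‖Su‖ ≤ ∑ i, ‖u i ^ 2‖ := norm_sum_le _ _
    _ = 1 := by simp only [norm_pow]; exact hu
  have hb : ‖Sv‖ ≤ 1 := by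
    calc ‖Sv‖ ≤ ∑ i, ‖v i ^ 2‖ := norm_sum_le _ _
    _ = 1 := by simp only [norm_pow]; exact hv
  have ha0 : 0 ≤ ‖Su‖ := norm_nonneg _
  have hb0 : 0 ≤ ‖Sv‖ := norm_nonneg _
  have hc0 : 0 ≤ ‖T‖ := norm_nonneg _
  rw [key]
  constructor
  · intro h
    have hcz : ‖T‖ = 0 := by nlinarith
    refine ⟨by nlinarith, by nlinarith, norm_eq_zero.mp hcz⟩
  · rintro ⟨h1, h2, h3⟩
    rw [h1, h2, h3]
    simp
    norm_num
end
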